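/- Let $G$ be a non-trivial finite group. The secondary Chebotarev invariant of $G$ satisfies $s(G) = \sum_{\emptyset \ne I \subseteq \max(G)} (-1)^{|I|+1} \,(1 + \nu(\mathcal{H}_I^{\sharp})) / (1 - \nu(\mathcal{H}_I^{\sharp}))^2$. -/

import Mathlib

/-!
`τ > n` exactly when the classes of `X₀, …, X_{n-1}` fail to generate `G`, i.e. when they all
lie in `𝓗♯` for one class `𝓗` of maximal subgroups, and `E(τ²) = ∑ₙ (2n + 1) P(τ > n)`. By
inclusion–exclusion over these classes, `P(τ > n) = ∑_{∅ ≠ I} (-1)^{|I|+1} ν(𝓗_I♯)ⁿ`, and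
`∑ₙ (2n + 1) qⁿ = (1 + q) / (1 - q)²`. The series converge because `ν(𝓗♯) < 1`: a finite group
is never the union of the conjugates of a proper subgroup.
-/

open MeasureTheory ProbabilityTheory Pointwise ENNReal

namespace Chebotarev

variable {G : Type*} [Group G]

/-- The conjugacy classes of the tuple `x 0, …, x (n-1)` *generate* `G`: every choice of
representatives from these conjugacy classes generates `G`. -/
def InvGen {n : ℕ} (x : Fin n → G) : Prop :=
  ∀ y : Fin n → G, (∀ i, IsConj (x i) (y i)) → Subgroup.closure (Set.range y) = ⊤

/-- The waiting time `τ = min {n ≥ 1 | the conjugacy classes of X₁, …, Xₙ generate G}`,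
with value `∞` if no such `n` exists. -/
noncomputable def tau {Ω : Type*} (X : ℕ → Ω → G) (ω : Ω) : ℝ≥0∞ :=
  sInf {t : ℝ≥0∞ | ∃ n : ℕ, t = n ∧ 1 ≤ n ∧ InvGen (fun i : Fin n => X i ω)}

/-- `(Xₙ)` is a sequence of independent random variables, each uniformly distributed
on the (finite) group `G`, on a probability space `(Ω, P)`. -/
def IsChebSetup {Ω : Type*} [MeasurableSpace Ω] (P : Measure Ω) (X : ℕ → Ω → G) : Prop :=
  IsProbabilityMeasure P ∧ (∀ n, @Measurable Ω G _ ⊤ (X n)) ∧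
    iIndepFun (m := fun _ : ℕ => (⊤ : MeasurableSpace G)) X P ∧
    ∀ (n : ℕ) (g : G), P {ω | X n ω = g} = (Nat.card G : ℝ≥0∞)⁻¹

/-- The Chebotarev invariant `c(G) = E(τ)`. -/
noncomputable def cheb {Ω : Type*} [MeasurableSpace Ω] (P : Measure Ω) (X : ℕ → Ω → G) : ℝ :=
  (∫⁻ ω, tau X ω ∂P).toReal

/-- The secondary Chebotarev invariant `s(G) = E(τ²)`. -/
noncomputable def scheb {Ω : Type*} [MeasurableSpace Ω] (P : Measure Ω) (X : ℕ → Ω → G) : ℝ :=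
  (∫⁻ ω, (tau X ω) ^ 2 ∂P).toReal

/-- normalized density `ν(A) = |A| / |G|`. -/
noncomputable def nu (G : Type*) [Group G] (A : Set G) : ℝ :=
  (Nat.card A : ℝ) / (Nat.card G : ℝ)

/-- Conjugacy classes of subgroups of `G` (orbits of the conjugation action). -/
abbrev SubConjClass (G : Type*) [Group G] :=
  Quotient (MulAction.orbitRel (ConjAct G) (Subgroup G))

/-- The conjugacy class of a subgroup. -/
def cls (H : Subgroup G) : SubConjClass G :=
  Quotient.mk (MulAction.orbitRel (ConjAct G) (Subgroup G)) H

/-- `max(G)`: the (finite) set of conjugacy classes of maximal proper subgroups of `G`. -/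
noncomputable def maxClasses (G : Type*) [Group G] [Finite G] : Finset (SubConjClass G) :=
  haveI : Finite (Subgroup G) :=
    Finite.of_injective (fun H => (H : Set G)) SetLike.coe_injective
  Set.Finite.toFinset (Set.toFinite {c : SubConjClass G | ∃ H : Subgroup G, cls H = c ∧ IsCoatom H})

/-- `𝓗♯`: the set of elements of `G` conjugate to an element of some subgroup in the
conjugacy class `c` of subgroups. -/
def sharp (c : SubConjClass G) : Set G :=
  {x : G | ∃ H : Subgroup G, cls H = c ∧ ∃ h ∈ H, IsConj h x}

end Chebotarev

open Chebotarev

theorem Finset.sum_range_two_mul_add_one (m : ℕ) :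
    ∑ n ∈ Finset.range m, (2 * n + 1) = m ^ 2 := by
  induction m with
  | zero => rfl
  | succ k ih => rw [Finset.sum_range_succ, ih]; ring

theorem hasSum_two_mul_add_one_mul_geometric {𝕜 : Type*} [NormedField 𝕜] [CompleteSpace 𝕜]
    {r : 𝕜} (hr : ‖r‖ < 1) :
    HasSum (fun n : ℕ => ((2 * n + 1 : ℕ) : 𝕜) * r ^ n) ((1 + r) / (1 - r) ^ 2) := by
  have hr' : 1 - r ≠ 0 := sub_ne_zero.mpr (by rintro rfl; simp at hr)
  have hterm : (fun n : ℕ => ((2 * n + 1 : ℕ) : 𝕜) * r ^ n) =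
      fun n : ℕ => 2 * ((n : 𝕜) * r ^ n) + r ^ n := by
    funext n
    push_cast
    ring
  rw [hterm, show (1 + r) / (1 - r) ^ 2 = 2 * (r / (1 - r) ^ 2) + (1 - r)⁻¹ by field_simp; ring]
  exact ((hasSum_coe_mul_geometric_of_norm_lt_one hr).mul_left 2).add
    (hasSum_geometric_of_norm_lt_one hr)

theorem ENNReal.sInf_natCast_sq_eq_tsum {p : ℕ → Prop} [DecidablePred p] (hp : Monotone p) :
    sInf {t : ℝ≥0∞ | ∃ n : ℕ, t = n ∧ p n} ^ 2 =
      ∑' n : ℕ, if p n then 0 else ((2 * n + 1 : ℕ) : ℝ≥0∞) := by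
  by_cases h : ∃ n, p n
  · have hsInf : sInf {t : ℝ≥0∞ | ∃ n : ℕ, t = n ∧ p n} = Nat.find h :=
      le_antisymm (sInf_le ⟨_, rfl, Nat.find_spec h⟩)
        (le_sInf fun _ ⟨n, hn, hpn⟩ => hn ▸ Nat.cast_le.mpr (Nat.find_min' h hpn))
    have hp_iff (n : ℕ) : p n ↔ Nat.find h ≤ n :=
      ⟨Nat.find_min' h, fun hn => hp hn (Nat.find_spec h)⟩
    rw [hsInf, tsum_eq_sum (s := Finset.range (Nat.find h)) fun n hn =>
        if_pos ((hp_iff n).mpr (by simpa using hn)),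
      Finset.sum_congr rfl fun n hn => if_neg ((hp_iff n).not.mpr (by simpa using hn)),
      ← Nat.cast_sum, Finset.sum_range_two_mul_add_one, Nat.cast_pow]
  · rw [not_exists] at h
    simp only [h, and_false, exists_false, Set.ofPred_false, sInf_empty, if_false]
    refine (ENNReal.top_pow two_ne_zero).trans (top_le_iff.mp ?_).symm
    calc (⊤ : ℝ≥0∞) = ∑' _ : ℕ, 1 := (ENNReal.tsum_const_eq_top_of_ne_zero one_ne_zero).symm
      _ ≤ _ := ENNReal.tsum_le_tsum fun n => by simp

open Finset in
theorem Set.natCard_biUnion_eq_sum_powerset {ι α : Type*} [Finite α] (s : Finset ι)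
    (A : ι → Set α) :
    (Nat.card ↥(⋃ i ∈ s, A i) : ℤ) = ∑ t ∈ s.powerset.filter (·.Nonempty),
      (-1 : ℤ) ^ (#t + 1) * Nat.card ↥(⋂ i ∈ t, A i) := by
  classical
  have := Fintype.ofFinite α
  rw [← sum_coe_sort]
  convert inclusion_exclusion_card_biUnion s fun i => (A i).toFinset using 3 with t
  · rw [Nat.card_eq_card_toFinset]
    congr 1
    ext
    simp
  · rw [Nat.card_eq_card_toFinset]
    congr 2
    ext
    simp [Finset.mem_inf']

theorem Set.natCard_setOf_forall_mem {ι α : Type*} [Finite ι] (A : Set α) :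
    Nat.card {x : ι → α | ∀ i, x i ∈ A} = Nat.card A ^ Nat.card ι := by
  rw [← Nat.card_fun]
  exact Nat.card_congr Equiv.subtypePiEquivPi

namespace Chebotarev

section Group

variable {G : Type*} [Group G]

theorem mem_sharp_cls {H : Subgroup G} {x : G} :
    x ∈ sharp (cls H) ↔ ∃ h ∈ H, IsConj h x := by
  refine ⟨?_, fun ⟨h, hh, hx⟩ => ⟨H, rfl, h, hh, hx⟩⟩
  rintro ⟨_, hH', h, hh, hx⟩
  obtain ⟨g, rfl⟩ : _ ∈ MulAction.orbit (ConjAct G) H := Quotient.eq''.mp hH'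
  obtain ⟨k, hk, rfl⟩ := Subgroup.mem_smul_pointwise_iff_exists _ _ _ |>.mp hh
  exact ⟨k, hk, (isConj_iff.mpr ⟨ConjAct.ofConjAct g, rfl⟩).trans hx⟩

theorem exists_isCoatom_of_mem_maxClasses [Finite G] {c : SubConjClass G}
    (hc : c ∈ maxClasses G) : ∃ H : Subgroup G, cls H = c ∧ IsCoatom H := by
  simpa [maxClasses] using hc

theorem InvGen.mono {m n : ℕ} (hmn : m ≤ n) {x : ℕ → G}
    (hm : InvGen fun i : Fin m => x i) : InvGen fun i : Fin n => x i := by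
  intro y hy
  rw [eq_top_iff, ← hm (y ∘ Fin.castLE hmn) fun i => hy (Fin.castLE hmn i)]
  exact Subgroup.closure_mono (Set.range_comp_subset_range _ y)

theorem not_invGen_of_isEmpty [Nontrivial G] (x : Fin 0 → G) : ¬ InvGen x := by
  intro hx
  simpa using hx x fun i => i.elim0

theorem not_invGen_iff [Finite G] {n : ℕ} (x : Fin n → G) :
    ¬ InvGen x ↔ ∃ c ∈ maxClasses G, ∀ i, x i ∈ sharp c := by
  constructor
  · intro hx
    obtain ⟨y, hy, hne⟩ := not_forall₂.mp hx
    obtain ⟨M, hM, hle⟩ :=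
      (eq_top_or_exists_le_coatom (Subgroup.closure (Set.range y))).resolve_left hne
    refine ⟨cls M, by simpa [maxClasses] using ⟨M, rfl, hM⟩, fun i => ?_⟩
    exact mem_sharp_cls.mpr ⟨y i, hle (Subgroup.subset_closure ⟨i, rfl⟩), (hy i).symm⟩
  · rintro ⟨c, hc, hx⟩ hgen
    obtain ⟨M, rfl, hM⟩ := exists_isCoatom_of_mem_maxClasses hc
    choose y hyM hy using fun i => mem_sharp_cls.mp (hx i)
    refine hM.1 (top_le_iff.mp ?_)
    rw [← hgen y fun i => (hy i).symm, Subgroup.closure_le]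
    exact Set.range_subset_iff.mpr hyM

/-- Writing `g = q k` with `q` the chosen representative of `g H` and `k ∈ H`, the conjugate
`g h g⁻¹` equals `q (k h k⁻¹) q⁻¹`. -/
theorem sharp_cls_subset (H : Subgroup G) :
    sharp (cls H) ⊆ insert 1 (Set.range fun p : (G ⧸ H) × ↥((H : Set G) \ {1}) =>
      p.1.out * p.2.1 * p.1.out⁻¹) := by
  intro x hx
  obtain ⟨h, hh, hconj⟩ := mem_sharp_cls.mp hx
  obtain ⟨g, rfl⟩ := isConj_iff.mp hconj
  rcases eq_or_ne h 1 with rfl | hne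
  · simp
  obtain ⟨k, hk⟩ := QuotientGroup.mk_out_eq_mul H g
  refine Set.mem_insert_of_mem _ ⟨⟨g, ⟨(k : G)⁻¹ * h * k, ?_, ?_⟩⟩, ?_⟩
  · exact H.mul_mem (H.mul_mem (H.inv_mem k.2) hh) k.2
  · simpa [mul_assoc, inv_mul_eq_iff_eq_mul] using hne
  · simp only [hk]
    group

theorem ncard_sharp_cls_lt [Finite G] {H : Subgroup G} (hH : H ≠ ⊤) :
    (sharp (cls H)).ncard < Nat.card G := by
  have hindex : 2 ≤ H.index := by
    have := H.index_ne_zero_of_finite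
    have := mt Subgroup.index_eq_one.mp hH
    omega
  have hcard : 1 ≤ Nat.card H := Nat.card_pos
  calc (sharp (cls H)).ncard ≤ (Set.range _).ncard + 1 :=
        (Set.ncard_le_ncard (sharp_cls_subset H)).trans (Set.ncard_insert_le _ _)
    _ ≤ H.index * (Nat.card H - 1) + 1 := by
        grw [← Nat.card_coe_set_eq, Finite.card_range_le, Nat.card_prod, Nat.card_coe_set_eq,
          Set.ncard_sdiff_singleton_of_mem H.one_mem, ← Nat.card_coe_set_eq]
        rfl
    _ < H.index * Nat.card H := by
        rw [Nat.mul_sub_one]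
        have := Nat.mul_le_mul_right (Nat.card H) hindex
        omega
    _ = Nat.card G := H.index_mul_card

theorem nu_biInter_sharp_lt_one [Finite G] {I : Finset (SubConjClass G)} (hI : I.Nonempty)
    (hIG : I ⊆ maxClasses G) : nu G (⋂ c ∈ I, sharp c) < 1 := by
  obtain ⟨c, hc⟩ := hI
  obtain ⟨H, rfl, hH⟩ := exists_isCoatom_of_mem_maxClasses (hIG hc)
  rw [nu, div_lt_one (mod_cast Nat.card_pos), Nat.card_coe_set_eq, Nat.cast_lt]
  exact (Set.ncard_le_ncard (Set.biInter_subset_of_mem hc)).trans_lt (ncard_sharp_cls_lt hH.1)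

theorem card_not_invGen_div_eq_sum [Finite G] (n : ℕ) :
    (Nat.card {x : Fin n → G | ¬ InvGen x} : ℝ) / Nat.card G ^ n =
      ∑ I ∈ (maxClasses G).powerset.filter Finset.Nonempty,
        (-1 : ℝ) ^ (I.card + 1) * nu G (⋂ c ∈ I, sharp c) ^ n := by
  have hbad : {x : Fin n → G | ¬ InvGen x} =
      ⋃ c ∈ maxClasses G, {x : Fin n → G | ∀ i, x i ∈ sharp c} := by
    ext x
    simp [not_invGen_iff]
  have hinter (I : Finset (SubConjClass G)) :
      ⋂ c ∈ I, {x : Fin n → G | ∀ i, x i ∈ sharp c} = {x | ∀ i, x i ∈ ⋂ c ∈ I, sharp c} := by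
    ext x
    simp only [Set.mem_iInter, Set.mem_ofPred_eq]
    exact ⟨fun h i c hc => h c hc i, fun h c hc i => h i c hc⟩
  have hIE := congrArg (Int.cast : ℤ → ℝ) (Set.natCard_biUnion_eq_sum_powerset (maxClasses G)
    fun c => {x : Fin n → G | ∀ i, x i ∈ sharp c})
  push_cast at hIE
  rw [hbad, hIE, Finset.sum_div]
  refine Finset.sum_congr rfl fun I _ => ?_
  rw [hinter, Set.natCard_setOf_forall_mem, Nat.card_eq_fintype_card (α := Fin n),
    Fintype.card_fin, nu, div_pow, Nat.cast_pow, mul_div_assoc]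

theorem hasSum_two_mul_add_one_mul_card_not_invGen_div [Finite G] :
    HasSum (fun n : ℕ => ((2 * n + 1 : ℕ) : ℝ) *
        ((Nat.card {x : Fin n → G | ¬ InvGen x} : ℝ) / Nat.card G ^ n))
      (∑ I ∈ (maxClasses G).powerset.filter Finset.Nonempty,
        (-1 : ℝ) ^ (I.card + 1) * (1 + nu G (⋂ c ∈ I, sharp c)) /
          (1 - nu G (⋂ c ∈ I, sharp c)) ^ 2) := by
  simp_rw [card_not_invGen_div_eq_sum, Finset.mul_sum]
  refine hasSum_sum fun I hI => ?_
  obtain ⟨hIG, hI⟩ := Finset.mem_filter.mp hI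
  have hq := nu_biInter_sharp_lt_one hI (Finset.mem_powerset.mp hIG)
  have hq0 : 0 ≤ nu G (⋂ c ∈ I, sharp c) := by unfold nu; positivity
  have hgeom := (hasSum_two_mul_add_one_mul_geometric
    ((Real.norm_of_nonneg hq0).trans_lt hq)).mul_left ((-1 : ℝ) ^ (I.card + 1))
  rw [← mul_div_assoc] at hgeom
  simpa only [mul_left_comm] using hgeom

end Group

section Probability

variable {G : Type*} {Ω : Type*} [MeasurableSpace Ω] {P : Measure Ω} {X : ℕ → Ω → G}

theorem measure_forall_eq (hX : IsChebSetup P X) {n : ℕ} (f : Fin n → G) :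
    P {ω | ∀ i : Fin n, X i ω = f i} = (Nat.card G : ℝ≥0∞)⁻¹ ^ n := by
  have hindep := (hX.2.2.1.precomp (Fin.val_injective (n := n))).measure_inter_preimage_eq_mul
    Finset.univ (sets := fun i => {f i}) fun _ _ => trivial
  simpa [Set.preimage, Set.ofPred_forall, hX.2.2.2] using hindep

theorem measurableSet_forall_eq (hX : IsChebSetup P X) {n : ℕ} (f : Fin n → G) :
    MeasurableSet {ω | ∀ i : Fin n, X i ω = f i} := by
  simpa only [Set.ofPred_forall] using
    .iInter fun i => hX.2.1 i (MeasurableSpace.measurableSet_top (s := {f i}))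

omit [MeasurableSpace Ω] in
theorem setOf_tuple_mem_eq_biUnion {n : ℕ} (S : Set (Fin n → G)) :
    {ω | (fun i : Fin n => X i ω) ∈ S} = ⋃ f ∈ S, {ω | ∀ i : Fin n, X i ω = f i} := by
  ext ω
  simp [← funext_iff]

theorem measurableSet_tuple_mem [Finite G] (hX : IsChebSetup P X) {n : ℕ}
    (S : Set (Fin n → G)) : MeasurableSet {ω | (fun i : Fin n => X i ω) ∈ S} := by
  rw [setOf_tuple_mem_eq_biUnion]
  exact .biUnion S.to_countable fun f _ => measurableSet_forall_eq hX f

theorem measure_tuple_mem [Finite G] (hX : IsChebSetup P X) {n : ℕ} (S : Set (Fin n → G)) :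
    P {ω | (fun i : Fin n => X i ω) ∈ S} = Nat.card S * (Nat.card G : ℝ≥0∞)⁻¹ ^ n := by
  rw [setOf_tuple_mem_eq_biUnion, measure_biUnion S.to_countable]
  · simp_rw [measure_forall_eq hX, ENNReal.tsum_const, ENat.card_eq_coe_natCard]
    rfl
  · intro f _ g _ hfg
    exact Set.disjoint_left.mpr fun ω hf hg => hfg (funext fun i => (hf i).symm.trans (hg i))
  · exact fun f _ => measurableSet_forall_eq hX f

variable [Group G]

omit [MeasurableSpace Ω] in
theorem tau_sq_eq_tsum [Nontrivial G] (X : ℕ → Ω → G) (ω : Ω) :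
    tau X ω ^ 2 = ∑' n : ℕ, {ω | ¬ InvGen fun i : Fin n => X i ω}.indicator
      (fun _ => ((2 * n + 1 : ℕ) : ℝ≥0∞)) ω := by
  classical
  rw [tau, ENNReal.sInf_natCast_sq_eq_tsum fun m n hmn ⟨hm, hgen⟩ =>
    ⟨hm.trans hmn, hgen.mono (x := (X · ω)) hmn⟩]
  refine tsum_congr fun n => ?_
  have hpos : (1 ≤ n ∧ InvGen fun i : Fin n => X i ω) ↔ InvGen fun i : Fin n => X i ω :=
    and_iff_right_of_imp fun hgen => Nat.one_le_iff_ne_zero.mpr <| by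
      rintro rfl
      exact not_invGen_of_isEmpty _ hgen
  simp only [hpos, Set.indicator_apply, Set.mem_ofPred_eq, ite_not]

theorem lintegral_tau_sq [Finite G] [Nontrivial G] (hX : IsChebSetup P X) :
    ∫⁻ ω, tau X ω ^ 2 ∂P = ∑' n : ℕ, ENNReal.ofReal (((2 * n + 1 : ℕ) : ℝ) *
      ((Nat.card {x : Fin n → G | ¬ InvGen x} : ℝ) / Nat.card G ^ n)) := by
  have hG : (0 : ℝ) < Nat.card G := mod_cast Nat.card_pos
  have hmeas (n : ℕ) : MeasurableSet {ω | ¬ InvGen fun i : Fin n => X i ω} :=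
    measurableSet_tuple_mem hX {x | ¬ InvGen x}
  simp_rw [tau_sq_eq_tsum]
  rw [lintegral_tsum fun n => (measurable_const.indicator (hmeas n)).aemeasurable]
  refine tsum_congr fun n => ?_
  have hbad : P {ω | ¬ InvGen fun i : Fin n => X i ω} =
      Nat.card {x : Fin n → G | ¬ InvGen x} * (Nat.card G : ℝ≥0∞)⁻¹ ^ n :=
    measure_tuple_mem hX {x : Fin n → G | ¬ InvGen x}
  rw [lintegral_indicator_const (hmeas n), hbad, ENNReal.ofReal_mul (by positivity),
    ENNReal.ofReal_div_of_pos (by positivity), ENNReal.ofReal_pow hG.le, ENNReal.ofReal_natCast,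
    ENNReal.ofReal_natCast, ENNReal.ofReal_natCast, div_eq_mul_inv, ENNReal.inv_pow]

end Probability

end Chebotarev

/-- **Proposition (formula for the secondary Chebotarev invariant).** For a non-trivial finite
group `G`, `s(G) = ∑_{∅ ≠ I ⊆ max(G)} (-1)^{|I|+1} (1 + ν(𝓗_I♯)) / (1 - ν(𝓗_I♯))²`. -/
theorem secondary_chebotarev_invariant_formula {G : Type*} [Group G] [Finite G] [Nontrivial G]
    {Ω : Type*} [MeasurableSpace Ω] (P : Measure Ω) (X : ℕ → Ω → G)
    (hX : IsChebSetup P X) :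
    scheb P X = ∑ I ∈ (maxClasses G).powerset.filter Finset.Nonempty,
      (-1 : ℝ) ^ (I.card + 1) * (1 + nu G (⋂ c ∈ I, sharp c)) /
        (1 - nu G (⋂ c ∈ I, sharp c)) ^ 2 := by
  have hsum := hasSum_two_mul_add_one_mul_card_not_invGen_div (G := G)
  have hnonneg (n : ℕ) : 0 ≤ ((2 * n + 1 : ℕ) : ℝ) *
      ((Nat.card {x : Fin n → G | ¬ InvGen x} : ℝ) / Nat.card G ^ n) := by
    positivity
  rw [scheb, lintegral_tau_sq hX, ← ENNReal.ofReal_tsum_of_nonneg hnonneg hsum.summable,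
    hsum.tsum_eq, ENNReal.toReal_ofReal (hsum.nonneg hnonneg)]
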